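/- Let W be an n×n real matrix, ρ ∈ ℝ^n with I_n − W·diag(ρ) invertible and det(I_{nT} − I_T ⊗ (W·diag(ρ))) > 0, let T ≥ 1 and i ∈ {1,…,n}. Then the real function s ↦ ln det(I_{nT} − I_T ⊗ (W·diag(ρ + s e_i))) is differentiable at s = 0 with derivative −T·[(I_n − W·diag(ρ))⁻¹ W]_{ii}, where e_i is the i-th standard basis vector of ℝ^n. -/

import Mathlib

/-!
Since `I_{nT} − I_T ⊗ X = I_T ⊗ (I_n − X)`, the determinant is `det(I_n − X)^T` and the
log-determinant is `T · ln det(I_n − X)`. Along the line `A + s B`, with `A = I_n − W diag ρ`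
invertible and `B = −W e_i e_iᵀ`, Jacobi's formula comes from the factorisation
`det(A + s B) = det A · det(1 + s A⁻¹B)` and the first-order expansion
`det(1 + s M) = 1 + s tr M + O(s²)`; finally `tr(A⁻¹ W e_i e_iᵀ) = (A⁻¹W)_{ii}`.
-/

open Matrix Kronecker Polynomial

namespace Matrix

variable {m n : Type*} [Fintype n] [DecidableEq n]

theorem hasDerivAt_det_one_add_smul {𝕜 : Type*} [NontriviallyNormedField 𝕜] (M : Matrix n n 𝕜) :
    HasDerivAt (fun s : 𝕜 => (1 + s • M).det) M.trace 0 := by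
  have h := (det (1 + (X : 𝕜[X]) • M.map C)).hasDerivAt 0
  rw [derivative_det_one_add_X_smul] at h
  convert h using 1
  ext s
  simp [eval_det, ← smul_eq_mul_diagonal]

theorem hasDerivAt_det_add_smul {𝕜 : Type*} [NontriviallyNormedField 𝕜] {A : Matrix n n 𝕜}
    (hA : IsUnit A) (B : Matrix n n 𝕜) :
    HasDerivAt (fun s : 𝕜 => (A + s • B).det) (A.det * (A⁻¹ * B).trace) 0 := by
  have hfactor : ∀ s : 𝕜, A + s • B = A * (1 + s • (A⁻¹ * B)) := fun s => by
    rw [mul_add, mul_one, Matrix.mul_smul,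
      mul_nonsing_inv_cancel_left _ _ ((isUnit_iff_isUnit_det A).mp hA)]
  simp_rw [hfactor, det_mul]
  exact (hasDerivAt_det_one_add_smul _).const_mul _

theorem hasDerivAt_log_det_add_smul {A : Matrix n n ℝ} (hA : IsUnit A) (B : Matrix n n ℝ) :
    HasDerivAt (fun s : ℝ => Real.log (A + s • B).det) (A⁻¹ * B).trace 0 := by
  have hdet : A.det ≠ 0 := ((isUnit_iff_isUnit_det A).mp hA).ne_zero
  convert (hasDerivAt_det_add_smul hA B).log (by simpa using hdet) using 1
  simp [hdet]

theorem det_one_sub_one_kronecker {R : Type*} [CommRing R] [Fintype m] [DecidableEq m]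
    (X : Matrix n n R) :
    (1 - (1 : Matrix m m R) ⊗ₖ X).det = (1 - X).det ^ Fintype.card m := by
  have h : 1 - (1 : Matrix m m R) ⊗ₖ X = (1 : Matrix m m R) ⊗ₖ (1 - X) := by
    ext ⟨a, b⟩ ⟨c, d⟩
    simp [one_apply, mul_sub, ← ite_and, and_comm]
  rw [h, det_kronecker, det_one, one_pow, one_mul]

theorem trace_mul_diagonal_single {R : Type*} [Semiring R] (M : Matrix n n R) (i : n) :
    (M * diagonal (Pi.single i 1)).trace = M i i := by
  simp [diagonal_single, trace_mul_single]

end Matrix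

theorem sar_logdet_derivative_general
    (n T : ℕ)
    (W : Matrix (Fin n) (Fin n) ℝ) (ρ : Fin n → ℝ) (i : Fin n)
    (hinv : IsUnit ((1 : Matrix (Fin n) (Fin n) ℝ) - W * Matrix.diagonal ρ)) :
    HasDerivAt
      (fun s : ℝ => Real.log
        (((1 : Matrix (Fin T × Fin n) (Fin T × Fin n) ℝ) -
            (1 : Matrix (Fin T) (Fin T) ℝ) ⊗ₖ
              (W * Matrix.diagonal (ρ + s • (Pi.single i 1 : Fin n → ℝ)))).det))
      (-(T : ℝ) * (((1 : Matrix (Fin n) (Fin n) ℝ) - W * Matrix.diagonal ρ)⁻¹ * W) i i)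
      0 := by
  set A := (1 : Matrix (Fin n) (Fin n) ℝ) - W * diagonal ρ
  set E : Matrix (Fin n) (Fin n) ℝ := W * diagonal (Pi.single i 1)
  have hpath : ∀ s : ℝ, 1 - W * diagonal (ρ + s • Pi.single i 1) = A + s • -E := fun s => by
    have hdiag :
        diagonal (ρ + s • Pi.single i 1) = diagonal ρ + s • diagonal (Pi.single i 1) := by
      rw [← diagonal_smul, diagonal_add]
      rfl
    rw [hdiag, mul_add, Matrix.mul_smul, smul_neg]
    simp only [A, E]
    abel
  have hderiv : (T : ℝ) * (A⁻¹ * -E).trace = -(T : ℝ) * (A⁻¹ * W) i i := by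
    rw [mul_neg, trace_neg, ← Matrix.mul_assoc, trace_mul_diagonal_single]
    ring
  simp_rw [det_one_sub_one_kronecker, Real.log_pow, Fintype.card_fin, hpath]
  exact hderiv ▸ (hasDerivAt_log_det_add_smul hinv (-E)).const_mul (T : ℝ)

/-- The map `s ↦ ln det(I_{nT} − I_T ⊗ (W·diag(ρ + s e_i)))` is differentiable at
`s = 0` with derivative `−T·[(I_n − W·diag ρ)⁻¹ W]_{ii}`. -/
theorem sar_logdet_derivative
    (n T : ℕ) (hT : 1 ≤ T)
    (W : Matrix (Fin n) (Fin n) ℝ) (ρ : Fin n → ℝ) (i : Fin n)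
    (hinv : IsUnit ((1 : Matrix (Fin n) (Fin n) ℝ) - W * Matrix.diagonal ρ))
    (hdet : 0 < ((1 : Matrix (Fin T × Fin n) (Fin T × Fin n) ℝ) -
        (1 : Matrix (Fin T) (Fin T) ℝ) ⊗ₖ (W * Matrix.diagonal ρ)).det) :
    HasDerivAt
      (fun s : ℝ => Real.log
        (((1 : Matrix (Fin T × Fin n) (Fin T × Fin n) ℝ) -
            (1 : Matrix (Fin T) (Fin T) ℝ) ⊗ₖ
              (W * Matrix.diagonal (ρ + s • (Pi.single i 1 : Fin n → ℝ)))).det))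
      (-(T : ℝ) * (((1 : Matrix (Fin n) (Fin n) ℝ) - W * Matrix.diagonal ρ)⁻¹ * W) i i)
      0 :=
  sar_logdet_derivative_general n T W ρ i hinv
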